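/- Let X be a second countable compact Hausdorff space and P a Markov operator on C(X) with representing kernel p. If U ⊆ X is an open set that is hereditary for P, then K = X \ U is a closed absorbing set: p(K,y) = 1 for every y ∈ K. -/

import Mathlib

open MeasureTheory Topology

/-- The support of a Markov operator given by the kernel `p`. -/
def markovSupp {X : Type*} [TopologicalSpace X] [MeasurableSpace X]
    (p : X → Measure X) : Set (X × X) :=
  {q : X × X | ¬ ∃ U V : Set X, IsOpen U ∧ IsOpen V ∧ q.1 ∈ U ∧ q.2 ∈ V ∧
      ∀ y ∈ V, p y U = 0}

lemma measure_eq_zero_of_forall_notMem_markovSupp {X : Type*} [TopologicalSpace X]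
    [SecondCountableTopology X] [MeasurableSpace X] {p : X → Measure X} {y : X} {s : Set X}
    (h : ∀ x ∈ s, (x, y) ∉ markovSupp p) : p y s = 0 :=
  measure_null_of_locally_null s fun x hx => by
    obtain ⟨V, W, hV, -, hxV, hyW, hnull⟩ := not_not.1 (h x hx)
    exact ⟨V, mem_nhdsWithin_of_mem_nhds (hV.mem_nhds hxV), hnull y hyW⟩

theorem stmt2_general {X : Type*} [TopologicalSpace X]
    [SecondCountableTopology X] [MeasurableSpace X]
    (p : X → Measure X) (hprob : ∀ y, IsProbabilityMeasure (p y))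
    (U : Set X)
    (hher : ∀ x y : X, (x, y) ∈ markovSupp p → x ∈ U → y ∈ U) :
    ∀ y ∈ Uᶜ, p y Uᶜ = 1 := by
  intro y hy
  have hnull : p y U = 0 :=
    measure_eq_zero_of_forall_notMem_markovSupp fun x hx hsupp => hy (hher x y hsupp hx)
  exact (prob_compl_eq_one_iff₀ (.of_null hnull)).2 hnull

theorem stmt2 {X : Type*} [TopologicalSpace X] [CompactSpace X] [T2Space X]
    [SecondCountableTopology X] [MeasurableSpace X] [BorelSpace X]
    (p : X → Measure X) (hprob : ∀ y, IsProbabilityMeasure (p y))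
    (hcont : ∀ f : C(X, ℂ), Continuous fun y => ∫ x, f x ∂(p y))
    (U : Set X) (hU : IsOpen U)
    (hher : ∀ x y : X, (x, y) ∈ markovSupp p → x ∈ U → y ∈ U) :
    ∀ y ∈ Uᶜ, p y Uᶜ = 1 :=
  stmt2_general p hprob U hher
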